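/- The integral from 0 to π/4 of ln(cos x - sin x) dx equals -(π/8)·ln 2 - G/2, and the integral from 0 to π/4 of ln(cos x + sin x) dx equals -(π/8)·ln 2 + G/2, where G = ∑_{k=0}^{∞} (-1)^k/(2k+1)^2 is Catalan's constant; consequently the integral from 0 to π/4 of ln(1 + tan x) dx equals (π/8)·ln 2. -/

import Mathlib

/-!
Write `S` and `C` for the integrals of `log ∘ sin` and `log ∘ cos` over `[0, π/4]`. Since
`cos x ∓ sin x = √2 sin (π/4 - x)`, resp. `√2 cos (π/4 - x)`, the first two integrals are
`(π/8) log 2 + S` and `(π/8) log 2 + C`, and `1 + tan x = (cos x + sin x) / cos x` makes the third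
one their difference. Reflecting `x ↦ π/2 - x` gives `S + C = ∫_0^{π/2} log sin = -(π/2) log 2`,
while `t = tan x` turns `S - C = ∫ log tan` into `∫_0^1 log t / (1 + t²) dt`; expanding
`1 / (1 + t²)` geometrically and using `∫_0^1 t^{2k} log t dt = -1/(2k+1)²` yields `S - C = -G`.
-/

open Real Set MeasureTheory intervalIntegral
open scoped Interval

/-- Valid for every `x`: where `sin x` or `cos x` vanishes, both sides are `0` because
`tan x = 0` when `cos x = 0` and `log 0 = log (-1) = 0`. -/
theorem log_tan_eq_log_sin_sub_log_cos (x : ℝ) : log (tan x) = log (sin x) - log (cos x) := by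
  rw [tan_eq_sin_div_cos]
  by_cases hs : sin x = 0
  · have : cos x ^ 2 = 1 := by nlinarith [sin_sq_add_cos_sq x]
    simp [hs, log_eq_zero, sq_eq_one_iff.1 this]
  by_cases hc : cos x = 0
  · have : sin x ^ 2 = 1 := by nlinarith [sin_sq_add_cos_sq x]
    simp [hc, eq_comm (a := (0:ℝ)), log_eq_zero, sq_eq_one_iff.1 this]
  exact log_div hs hc

theorem intervalIntegrable_log_tan {a b : ℝ} :
    IntervalIntegrable (fun x => log (tan x)) volume a b := by
  simpa only [log_tan_eq_log_sin_sub_log_cos, Function.comp_apply] using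
    intervalIntegrable_log_sin.sub intervalIntegrable_log_cos

theorem intervalIntegrable_pow_mul_log (n : ℕ) {a b : ℝ} :
    IntervalIntegrable (fun t => t ^ n * log t) volume a b :=
  intervalIntegrable_log'.continuousOn_mul (continuous_pow n).continuousOn

theorem intervalIntegrable_log_div_one_add_sq {a b : ℝ} :
    IntervalIntegrable (fun t => log t / (1 + t ^ 2)) volume a b := by
  simpa only [div_eq_mul_inv, Pi.inv_apply] using intervalIntegrable_log'.mul_continuousOn
    (ContinuousOn.inv₀ (by fun_prop) fun t _ => by positivity)

theorem integral_pow_mul_log_zero_one (n : ℕ) :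
    ∫ t in (0:ℝ)..1, t ^ n * log t = -1 / (n + 1) ^ 2 := by
  let F : ℝ → ℝ := fun t => t ^ (n + 1) * log t / (n + 1) - t ^ (n + 1) / (n + 1) ^ 2
  have hF_cont : Continuous F := by
    have : F = fun t => t ^ n * (t * log t) / (n + 1) - t ^ (n + 1) / (n + 1) ^ 2 := by
      ext t; simp only [F]; ring
    rw [this]
    fun_prop
  have hF_deriv : ∀ t ∈ Ioo (0:ℝ) 1, HasDerivAt F (t ^ n * log t) t := by
    intro t ht
    have := (((hasDerivAt_pow (n + 1) t).fun_mul (hasDerivAt_log ht.1.ne')).div_const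
      (n + 1 : ℝ)).fun_sub ((hasDerivAt_pow (n + 1) t).div_const ((n + 1 : ℝ) ^ 2))
    refine this.congr_deriv ?_
    rw [Nat.add_sub_cancel, pow_succ]
    push_cast
    field_simp [ht.1.ne']
    ring
  rw [integral_eq_sub_of_hasDeriv_right_of_le zero_le_one hF_cont.continuousOn
    (fun t ht => (hF_deriv t ht).hasDerivWithinAt) (intervalIntegrable_pow_mul_log n)]
  simp [F, field]

theorem summable_one_div_two_mul_add_one_sq :
    Summable fun k : ℕ => 1 / (2 * (k : ℝ) + 1) ^ 2 := by
  have := (summable_one_div_nat_pow.2 one_lt_two).comp_injective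
    (f := fun n : ℕ => 1 / (n : ℝ) ^ 2) (i := fun k : ℕ => 2 * k + 1)
    (fun a b h => by simpa using h)
  exact_mod_cast this

theorem hasSum_neg_sq_pow_mul_log {t : ℝ} (ht : t ∈ Ioc 0 1) :
    HasSum (fun k : ℕ => (-t ^ 2) ^ k * log t) (log t / (1 + t ^ 2)) := by
  rcases ht.2.lt_or_eq with ht1 | rfl
  · have hq : ‖-t ^ 2‖ < 1 := by
      rw [norm_neg, norm_pow, Real.norm_of_nonneg ht.1.le]
      exact pow_lt_one₀ ht.1.le ht1 two_ne_zero
    have := (hasSum_geometric_of_norm_lt_one hq).mul_right (log t)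
    rwa [sub_neg_eq_add, inv_mul_eq_div] at this
  · simp

theorem integral_log_div_one_add_sq_zero_one :
    ∫ t in (0:ℝ)..1, log t / (1 + t ^ 2) = -∑' k : ℕ, (-1 : ℝ) ^ k / (2 * k + 1) ^ 2 := by
  let F : ℕ → ℝ → ℝ := fun k t => (-1) ^ k * (t ^ (2 * k) * log t)
  have hF : ∀ k t, F k t = (-t ^ 2) ^ k * log t := fun k t => by
    rw [neg_pow (t ^ 2), ← pow_mul, mul_assoc]
  have hF_integral : ∀ k : ℕ, ∫ t in (0:ℝ)..1, F k t = -((-1) ^ k / (2 * k + 1) ^ 2) := by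
    intro k
    simp only [F, intervalIntegral.integral_const_mul, integral_pow_mul_log_zero_one]
    push_cast
    ring
  have hF_norm : ∀ k : ℕ, ∫ t in (0:ℝ)..1, ‖F k t‖ = 1 / (2 * k + 1) ^ 2 := by
    intro k
    have h : ∀ t ∈ uIcc (0:ℝ) 1, ‖F k t‖ = -(t ^ (2 * k) * log t) := by
      intro t ht
      rw [uIcc_of_le zero_le_one] at ht
      rw [norm_mul, norm_pow, norm_neg, norm_one, one_pow, one_mul, Real.norm_eq_abs,
        abs_of_nonpos (mul_nonpos_of_nonneg_of_nonpos (pow_nonneg ht.1 _) (log_nonpos ht.1 ht.2))]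
    rw [integral_congr h, intervalIntegral.integral_neg, integral_pow_mul_log_zero_one]
    push_cast
    ring
  have hF_int : ∀ k, IntegrableOn (F k) (Ioc 0 1) := fun k =>
    (intervalIntegrable_iff_integrableOn_Ioc_of_le zero_le_one).1
      ((intervalIntegrable_pow_mul_log (2 * k)).const_mul _)
  have hF_hasSum := hasSum_integral_of_summable_integral_norm hF_int (by
    simpa only [← integral_of_le zero_le_one, hF_norm] using summable_one_div_two_mul_add_one_sq)
  calc ∫ t in (0:ℝ)..1, log t / (1 + t ^ 2) = ∫ t in Ioc 0 1, ∑' k, F k t := by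
        rw [integral_of_le zero_le_one]
        refine setIntegral_congr_fun measurableSet_Ioc fun t ht => ?_
        simp only [hF, (hasSum_neg_sq_pow_mul_log ht).tsum_eq]
    _ = ∑' k, ∫ t in Ioc 0 1, F k t := hF_hasSum.tsum_eq.symm
    _ = -∑' k : ℕ, (-1 : ℝ) ^ k / (2 * k + 1) ^ 2 := by
        simp only [← integral_of_le zero_le_one, hF_integral, tsum_neg]

theorem cos_pos_of_mem_uIcc_zero_pi_div_four {x : ℝ} (hx : x ∈ [[0, π / 4]]) : 0 < cos x := by
  rw [uIcc_of_le (by positivity)] at hx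
  exact cos_pos_of_mem_Ioo ⟨by linarith [hx.1, pi_pos], by linarith [hx.2, pi_pos]⟩

theorem sin_pos_of_mem_uIoc_zero_pi_div_four {x : ℝ} (hx : x ∈ Ι 0 (π / 4)) : 0 < sin x := by
  rw [uIoc_of_le (by positivity)] at hx
  exact sin_pos_of_pos_of_lt_pi hx.1 (by linarith [hx.2, pi_pos])

theorem integral_log_tan_zero_pi_div_four :
    ∫ x in (0:ℝ)..π / 4, log (tan x) = ∫ t in (0:ℝ)..1, log t / (1 + t ^ 2) := by
  have hpi : (0:ℝ) ≤ π / 4 := by positivity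
  let g : ℝ → ℝ := fun t => log t / (1 + t ^ 2)
  have hcos := fun x (hx : x ∈ [[0, π / 4]]) => (cos_pos_of_mem_uIcc_zero_pi_div_four hx).ne'
  have hjac : EqOn (fun x => (g ∘ tan) x * (1 / cos x ^ 2)) (fun x => log (tan x))
      [[0, π / 4]] := fun x hx => by
    simp only [g, Function.comp, div_eq_mul_inv, inv_one_add_tan_sq (hcos x hx)]
    field_simp [hcos x hx]
  have htan_Icc : tan '' [[0, π / 4]] ⊆ Icc 0 1 := by
    rintro _ ⟨x, hx, rfl⟩
    rw [uIcc_of_le hpi] at hx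
    have hx' : x < π / 2 := by linarith [hx.2, pi_pos]
    refine ⟨tan_nonneg_of_nonneg_of_le_pi_div_two hx.1 hx'.le, ?_⟩
    rw [← tan_pi_div_four]
    exact strictMonoOn_tan.monotoneOn ⟨by linarith [hx.1, pi_pos], hx'⟩
      ⟨by linarith [pi_pos], by linarith [pi_pos]⟩ hx.2
  have htan_ne : tan '' Ioo (min 0 (π / 4)) (max 0 (π / 4)) ⊆ {0}ᶜ := by
    rintro _ ⟨x, hx, rfl⟩
    rw [min_eq_left hpi, max_eq_right hpi] at hx
    exact (tan_pos_of_pos_of_lt_pi_div_two hx.1 (by linarith [hx.2, pi_pos])).ne'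
  have hsubst := integral_comp_mul_deriv''' (f := tan) (f' := fun x => 1 / cos x ^ 2) (g := g)
    (continuousOn_tan.mono fun x hx => hcos x hx)
    (fun x hx => (hasDerivAt_tan (hcos x (Ioo_subset_Icc_self hx))).hasDerivWithinAt)
    ((continuousOn_log.div (by fun_prop) fun t _ => by positivity).mono htan_ne)
    (((intervalIntegrable_iff_integrableOn_Icc_of_le zero_le_one).1
      intervalIntegrable_log_div_one_add_sq).mono_set htan_Icc)
    (((intervalIntegrable_iff').1 intervalIntegrable_log_tan).congr_fun hjac.symm measurableSet_uIcc)
  rw [tan_zero, tan_pi_div_four] at hsubst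
  rw [← hsubst]
  exact integral_congr fun x hx => (hjac hx).symm

theorem integral_log_sin_add_integral_log_cos_zero_pi_div_four :
    (∫ x in (0:ℝ)..π / 4, log (sin x)) + ∫ x in (0:ℝ)..π / 4, log (cos x) = -log 2 * π / 2 := by
  have hcos : ∫ x in (0:ℝ)..π / 4, log (cos x) = ∫ x in π / 4..π / 2, log (sin x) := by
    simp only [← sin_pi_div_two_sub]
    rw [intervalIntegral.integral_comp_sub_left (fun x => log (sin x)), sub_zero]
    ring_nf
  rw [hcos, integral_add_adjacent_intervals (f := fun x => log (sin x)) intervalIntegrable_log_sin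
    intervalIntegrable_log_sin, integral_log_sin_zero_pi_div_two]

theorem integral_log_const_mul {f : ℝ → ℝ} {a b c : ℝ} (hc : c ≠ 0)
    (hf : ∀ x ∈ Ι a b, f x ≠ 0) (hf_int : IntervalIntegrable (fun x => log (f x)) volume a b) :
    ∫ x in a..b, log (c * f x) = (b - a) * log c + ∫ x in a..b, log (f x) := by
  rw [integral_congr_ae (g := fun x => log c + log (f x))
      (.of_forall fun x hx => log_mul hc (hf x hx)),
    integral_add intervalIntegrable_const hf_int, intervalIntegral.integral_const, smul_eq_mul]

theorem cos_sub_sin_eq_sqrt_two_mul_sin (x : ℝ) : cos x - sin x = √2 * sin (π / 4 - x) := by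
  rw [sin_sub, sin_pi_div_four, cos_pi_div_four]
  linear_combination (-(cos x - sin x) / 2) * mul_self_sqrt (zero_le_two : (0:ℝ) ≤ 2)

theorem cos_add_sin_eq_sqrt_two_mul_cos (x : ℝ) : cos x + sin x = √2 * cos (π / 4 - x) := by
  rw [cos_sub, sin_pi_div_four, cos_pi_div_four]
  linear_combination (-(cos x + sin x) / 2) * mul_self_sqrt (zero_le_two : (0:ℝ) ≤ 2)

theorem integral_log_cos_sub_sin_zero_pi_div_four :
    ∫ x in (0:ℝ)..π / 4, log (cos x - sin x) = log 2 * π / 8 + ∫ x in (0:ℝ)..π / 4, log (sin x) := by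
  simp only [cos_sub_sin_eq_sqrt_two_mul_sin]
  rw [intervalIntegral.integral_comp_sub_left (fun x => log (√2 * sin x)), sub_self, sub_zero,
    integral_log_const_mul (by positivity) (fun x hx => (sin_pos_of_mem_uIoc_zero_pi_div_four hx).ne')
      intervalIntegrable_log_sin, log_sqrt zero_le_two]
  ring

theorem integral_log_cos_add_sin_zero_pi_div_four :
    ∫ x in (0:ℝ)..π / 4, log (cos x + sin x) = log 2 * π / 8 + ∫ x in (0:ℝ)..π / 4, log (cos x) := by
  simp only [cos_add_sin_eq_sqrt_two_mul_cos]
  rw [intervalIntegral.integral_comp_sub_left (fun x => log (√2 * cos x)), sub_self, sub_zero,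
    integral_log_const_mul (by positivity)
      (fun x hx => (cos_pos_of_mem_uIcc_zero_pi_div_four (uIoc_subset_uIcc hx)).ne')
      intervalIntegrable_log_cos, log_sqrt zero_le_two]
  ring

theorem integral_log_one_add_tan_zero_pi_div_four :
    ∫ x in (0:ℝ)..π / 4, log (1 + tan x) =
      (∫ x in (0:ℝ)..π / 4, log (cos x + sin x)) - ∫ x in (0:ℝ)..π / 4, log (cos x) := by
  rw [← integral_sub (f := fun x => log (cos x + sin x)) (g := fun x => log (cos x))
    (analyticOnNhd_cos.add analyticOnNhd_sin).meromorphicOn.intervalIntegrable_log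
    intervalIntegrable_log_cos]
  refine integral_congr_ae (.of_forall fun x hx => ?_)
  have hc := cos_pos_of_mem_uIcc_zero_pi_div_four (uIoc_subset_uIcc hx)
  have hs := sin_pos_of_mem_uIoc_zero_pi_div_four hx
  rw [← log_div (by positivity) hc.ne', tan_eq_sin_div_cos, add_div, div_self hc.ne']

/-- GR 4.225.1, 4.225.2 and 4.227.9:
`∫_0^{π/4} ln(cos x - sin x) dx = -(π/8) ln 2 - G/2`,
`∫_0^{π/4} ln(cos x + sin x) dx = -(π/8) ln 2 + G/2`, and
`∫_0^{π/4} ln(1 + tan x) dx = (π/8) ln 2`, where `G` is Catalan's constant. -/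
theorem integral_log_cos_sub_add_sin :
    (∫ x in (0:ℝ)..(Real.pi / 4), Real.log (Real.cos x - Real.sin x) =
      -(Real.pi / 8) * Real.log 2 - (∑' k : ℕ, (-1 : ℝ) ^ k / (2 * (k : ℝ) + 1) ^ 2) / 2) ∧
    (∫ x in (0:ℝ)..(Real.pi / 4), Real.log (Real.cos x + Real.sin x) =
      -(Real.pi / 8) * Real.log 2 + (∑' k : ℕ, (-1 : ℝ) ^ k / (2 * (k : ℝ) + 1) ^ 2) / 2) ∧
    (∫ x in (0:ℝ)..(Real.pi / 4), Real.log (1 + Real.tan x) = (Real.pi / 8) * Real.log 2) := by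
  have hsum := integral_log_sin_add_integral_log_cos_zero_pi_div_four
  have hdiff : (∫ x in (0:ℝ)..π / 4, log (sin x)) - ∫ x in (0:ℝ)..π / 4, log (cos x) =
      -∑' k : ℕ, (-1 : ℝ) ^ k / (2 * (k : ℝ) + 1) ^ 2 := by
    rw [← integral_sub (f := fun x => log (sin x)) (g := fun x => log (cos x))
      intervalIntegrable_log_sin intervalIntegrable_log_cos]
    simp only [← log_tan_eq_log_sin_sub_log_cos, integral_log_tan_zero_pi_div_four,
      integral_log_div_one_add_sq_zero_one]
  refine ⟨?_, ?_, ?_⟩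
  · rw [integral_log_cos_sub_sin_zero_pi_div_four]
    linarith
  · rw [integral_log_cos_add_sin_zero_pi_div_four]
    linarith
  · rw [integral_log_one_add_tan_zero_pi_div_four, integral_log_cos_add_sin_zero_pi_div_four]
    ring
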